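/- arXiv:2508.08579 — 5 statements merged into one kernel-verified Lean document; each statement's English description precedes it below -/
import Mathlib

section
/- Extension of the gKYP lemma to LPV systems (sufficiency direction of Theorem 2). Let n, p, q be positive integers and let A, B, C, D be continuous matrix-valued functions on [0,∞) with values in ℂ^{n×n}, ℂ^{n×p}, ℂ^{q×n}, ℂ^{q×p} respectively (arising from composing continuous matrix functions of the scheduling parameter with a parameter trajectory). Let x : [0,∞) → ℂⁿ be continuously differentiable with x(0) = 0, let u : [0,∞) → ℂ^p be continuous, assume ẋ(t) = A(t)x(t) + B(t)u(t) for all t ≥ 0, and define y(t) = C(t)x(t) + D(t)u(t). Let Π ∈ ℂ^{(q+p)×(q+p)} and Ψ ∈ ℂ^{2×2} be Hermitian, let P : [0,∞) → ℂ^{n×n} be differentiable with P(t) Hermitian for every t, and let Q : [0,∞) → ℂ^{n×n} be continuous with Q(t) Hermitian positive semidefinite for every t. Assume: (i) for every t ≥ 0, the block matrix inequality [A(t) B(t); I 0]^* (Θ ⊗ P(t) + Θ_d ⊗ P'(t) + Ψ ⊗ Q(t)) [A(t) B(t); I 0] + [C(t) D(t); 0 I]^* Π [C(t) D(t); 0 I]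 ⪯ 0 holds; (ii) the function t ↦ [ẋ(t); x(t)]^* (Ψ ⊗ Q(t)) [ẋ(t); x(t)] is integrable on [0,∞) and ∫₀^∞ [ẋ(t); x(t)]^* (Ψ ⊗ Q(t)) [ẋ(t); x(t)] dt ≥ 0; (iii) the function t ↦ [y(t); u(t)]^* Π [y(t); u(t)] is integrable on [0,∞); (iv) lim_{T→∞} x(T)^* P(T) x(T) exists and is nonnegative. Then ∫₀^∞ [y(t); u(t)]^* Π [y(t); u(t)] dt ≤ 0. -/
/-!
`V(t) = x(t)^* P(t) x(t)` is a storage function. Its derivative is the quadratic form of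
`Θ ⊗ P(t) + Θ_d ⊗ P'(t)` at `[ẋ(t); x(t)]`, and `[A B; I 0] [x; u] = [ẋ; x]`,
`[C D; 0 I] [x; u] = [y; u]`, so testing the LMI at `t` against `[x(t); u(t)]` gives the
dissipation inequality `V'(t) + σ_IQC(t) + σ_perf(t) ≤ 0`, with `σ_IQC`, `σ_perf` the
integrands of (ii) and (iii). Integrating from `0`, where `V` vanishes, and letting `T → ∞`
yields `L + ∫ σ_IQC + ∫ σ_perf ≤ 0` with `L ≥ 0` and `∫ σ_IQC ≥ 0`.
-/

open Matrix MeasureTheory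
open scoped ComplexOrder Matrix.Norms.L2Operator

/-- `Ψ ⊗ Q`: the Kronecker product of a `2×2` matrix with an `n×n` matrix,
realized as a `2n × 2n` block matrix. -/
noncomputable def kron2 {n : ℕ} (Ψ : Matrix (Fin 2) (Fin 2) ℂ)
    (Q : Matrix (Fin n) (Fin n) ℂ) : Matrix (Fin n ⊕ Fin n) (Fin n ⊕ Fin n) ℂ :=
  Matrix.fromBlocks (Ψ 0 0 • Q) (Ψ 0 1 • Q) (Ψ 1 0 • Q) (Ψ 1 1 • Q)

/-- The real-valued Hermitian quadratic form `z ↦ z^* H z`. -/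
noncomputable def qf {m : Type*} [Fintype m] (H : Matrix m m ℂ) (z : m → ℂ) : ℝ :=
  (dotProduct (star z) (H.mulVec z)).re

open Filter Set Topology

section
variable {E F G : Type*} [NormedAddCommGroup E] [NormedSpace ℝ E] [FiniteDimensional ℝ E]
  [NormedAddCommGroup F] [NormedSpace ℝ F] [FiniteDimensional ℝ F]
  [NormedAddCommGroup G] [NormedSpace ℝ G]

theorem LinearMap.hasDerivAt_of_bilinear (f : E →ₗ[ℝ] F →ₗ[ℝ] G) {u : ℝ → E} {v : ℝ → F}
    {u' : E} {v' : F} {t : ℝ} (hu : HasDerivAt u u' t) (hv : HasDerivAt v v' t) :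
    HasDerivAt (fun s => f (u s) (v s)) (f u' (v t) + f (u t) v') t := by
  let B : E →L[ℝ] F →L[ℝ] G :=
    LinearMap.toContinuousLinearMap (LinearMap.toContinuousLinearMap.toLinearMap ∘ₗ f)
  simpa [B, add_comm] using B.hasDerivAt_of_bilinear (fun _ => hu) (fun _ => hv)

end

section
variable {m k l : Type*} [Fintype m] [Fintype k] [Fintype l]

theorem qf_add (H K : Matrix m m ℂ) (z : m → ℂ) : qf (H + K) z = qf H z + qf K z := by
  simp [qf, add_mulVec, dotProduct_add]

theorem qf_conjTranspose_mul_mul (H : Matrix m m ℂ) (N : Matrix m k ℂ) (z : k → ℂ) :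
    qf (Nᴴ * H * N) z = qf H (N *ᵥ z) := by
  rw [qf, qf, star_mulVec, ← dotProduct_mulVec, mulVec_mulVec, mulVec_mulVec, Matrix.mul_assoc]

theorem qf_nonpos_of_posSemidef_neg {M : Matrix m m ℂ} (h : (-M).PosSemidef) (z : m → ℂ) :
    qf M z ≤ 0 := by
  simpa [qf, neg_mulVec] using (Complex.nonneg_iff.mp (h.dotProduct_mulVec_nonneg z)).1

theorem qf_add_qf_nonpos_of_posSemidef_neg {N₁ : Matrix k m ℂ} {H₁ : Matrix k k ℂ}
    {N₂ : Matrix l m ℂ} {H₂ : Matrix l l ℂ} (h : (-(N₁ᴴ * H₁ * N₁ + N₂ᴴ * H₂ * N₂)).PosSemidef)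
    (z : m → ℂ) : qf H₁ (N₁ *ᵥ z) + qf H₂ (N₂ *ᵥ z) ≤ 0 := by
  simpa only [qf_add, qf_conjTranspose_mul_mul] using qf_nonpos_of_posSemidef_neg h z

theorem hasDerivAt_qf {P : ℝ → Matrix m m ℂ} {x : ℝ → m → ℂ} {P' : Matrix m m ℂ}
    {x' : m → ℂ} {t : ℝ} (hP : HasDerivAt P P' t) (hx : HasDerivAt x x' t) :
    HasDerivAt (fun s => qf (P s) (x s))
      (star x' ⬝ᵥ P t *ᵥ x t + star (x t) ⬝ᵥ (P' *ᵥ x t + P t *ᵥ x')).re t := by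
  -- `HasDerivAt` on matrices refers to the entrywise topology, which the entrywise sup norm induces.
  let _ := Matrix.normedAddCommGroup (n := m) (m := m) (α := ℂ)
  let _ := Matrix.normedSpace (n := m) (m := m) (α := ℂ) (R := ℝ)
  have hPx := (mulVecBilin ℝ ℝ).hasDerivAt_of_bilinear hP hx
  have hxPx := (dotProductBilin ℝ ℝ).hasDerivAt_of_bilinear hx.star hPx
  exact Complex.reCLM.hasFDerivAt.comp_hasDerivAt t hxPx

end

theorem hasDerivAt_qf_kron2 {n : ℕ} {P : ℝ → Matrix (Fin n) (Fin n) ℂ} {x : ℝ → Fin n → ℂ}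
    {P' : Matrix (Fin n) (Fin n) ℂ} {x' : Fin n → ℂ} {t : ℝ}
    (hP : HasDerivAt P P' t) (hx : HasDerivAt x x' t) :
    HasDerivAt (fun s => qf (P s) (x s))
      (qf (kron2 !![0,1;1,0] (P t) + kron2 !![0,0;0,1] P') (Sum.elim x' (x t))) t := by
  refine (hasDerivAt_qf hP hx).congr_deriv ?_
  simp only [qf, Function.star_sumElim, kron2, Fin.isValue, of_apply, cons_val', cons_val_zero,
    cons_val_fin_one, zero_smul, cons_val_one, one_smul, fromBlocks_add, add_zero, zero_add,
    fromBlocks_mulVec, Sum.elim_comp_inl, zero_mulVec, Sum.elim_comp_inr,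
    sumElim_dotProduct_sumElim, dotProduct_add, Complex.add_re]
  ring

section
variable {α m k l : Type*} [NonAssocSemiring α] [Fintype m] [Fintype k]

theorem fromBlocks_one_zero_mulVec_sumElim [DecidableEq m] (A : Matrix l m α)
    (B : Matrix l k α) (x : m → α) (u : k → α) :
    fromBlocks A B 1 0 *ᵥ Sum.elim x u = Sum.elim (A *ᵥ x + B *ᵥ u) x := by
  simp [fromBlocks_mulVec]

theorem fromBlocks_zero_one_mulVec_sumElim [DecidableEq k] (C : Matrix l m α)
    (D : Matrix l k α) (x : m → α) (u : k → α) :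
    fromBlocks C D 0 1 *ᵥ Sum.elim x u = Sum.elim (C *ᵥ x + D *ᵥ u) u := by
  simp [fromBlocks_mulVec]

end

theorem sub_le_integral_Ioi_of_hasDerivAt_of_le {V V' φ : ℝ → ℝ} {L : ℝ}
    (hV : ∀ t ∈ Ici 0, HasDerivAt V (V' t) t) (hle : ∀ t ∈ Ioi 0, V' t ≤ φ t)
    (hφ : IntegrableOn φ (Ioi 0)) (hlim : Tendsto V atTop (𝓝 L)) :
    L - V 0 ≤ ∫ t in Ioi 0, φ t := by
  have hφIci : IntegrableOn φ (Ici 0) := (integrableOn_Ici_iff_integrableOn_Ioi).mpr hφ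
  have hfinite : ∀ T ∈ Ici (0 : ℝ), V T - V 0 ≤ ∫ t in 0..T, φ t := fun T hT =>
    intervalIntegral.sub_le_integral_of_hasDeriv_right_of_le hT
      (fun t ht => (hV t ht.1).continuousAt.continuousWithinAt)
      (fun t ht => (hV t ht.1.le).hasDerivWithinAt)
      (hφIci.mono_set Icc_subset_Ici_self) (fun t ht => hle t ht.1)
  exact le_of_tendsto_of_tendsto (hlim.sub_const _)
    (intervalIntegral_tendsto_integral_Ioi 0 hφ tendsto_id)
    (eventually_atTop.mpr ⟨0, hfinite⟩)

theorem gKYP_extension_LPV_general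
    {n p q : ℕ}
    (A : ℝ → Matrix (Fin n) (Fin n) ℂ) (B : ℝ → Matrix (Fin n) (Fin p) ℂ)
    (C : ℝ → Matrix (Fin q) (Fin n) ℂ) (D : ℝ → Matrix (Fin q) (Fin p) ℂ)
    (x : ℝ → Fin n → ℂ) (x' : ℝ → Fin n → ℂ)
    (hx : ∀ t ∈ Set.Ici (0:ℝ), HasDerivAt x (x' t) t)
    (hx0 : x 0 = 0)
    (u : ℝ → Fin p → ℂ)
    (hode : ∀ t ∈ Set.Ici (0:ℝ), x' t = (A t).mulVec (x t) + (B t).mulVec (u t))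
    (y : ℝ → Fin q → ℂ)
    (hy : ∀ t ∈ Set.Ici (0:ℝ), y t = (C t).mulVec (x t) + (D t).mulVec (u t))
    (Pi : Matrix (Fin q ⊕ Fin p) (Fin q ⊕ Fin p) ℂ)
    (Ψ : Matrix (Fin 2) (Fin 2) ℂ)
    (P P' : ℝ → Matrix (Fin n) (Fin n) ℂ)
    (hP : ∀ t ∈ Set.Ici (0:ℝ), HasDerivAt P (P' t) t)
    (Q : ℝ → Matrix (Fin n) (Fin n) ℂ)
    -- (i) the pointwise LMI
    (hLMI : ∀ t ∈ Set.Ici (0:ℝ),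
      Matrix.PosSemidef
        (-((Matrix.fromBlocks (A t) (B t) (1 : Matrix (Fin n) (Fin n) ℂ) 0)ᴴ *
              (kron2 !![0,1;1,0] (P t) + kron2 !![0,0;0,1] (P' t) + kron2 Ψ (Q t)) *
              Matrix.fromBlocks (A t) (B t) 1 0 +
            (Matrix.fromBlocks (C t) (D t) 0 (1 : Matrix (Fin p) (Fin p) ℂ))ᴴ * Pi *
              Matrix.fromBlocks (C t) (D t) 0 1)))
    -- (ii) the frequency-dependent IQC
    (hIQCint : IntegrableOn
      (fun t => qf (kron2 Ψ (Q t)) (Sum.elim (x' t) (x t))) (Set.Ioi 0))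
    (hIQC : 0 ≤ ∫ t in Set.Ioi (0:ℝ), qf (kron2 Ψ (Q t)) (Sum.elim (x' t) (x t)))
    -- (iii) integrability of the performance integrand
    (hPerfInt : IntegrableOn (fun t => qf Pi (Sum.elim (y t) (u t))) (Set.Ioi 0))
    -- (iv) the storage function has a nonnegative limit
    (hlim : ∃ L : ℝ, 0 ≤ L ∧
      Filter.Tendsto (fun T => qf (P T) (x T)) Filter.atTop (nhds L)) :
    ∫ t in Set.Ioi (0:ℝ), qf Pi (Sum.elim (y t) (u t)) ≤ 0 := by
  obtain ⟨L, hL0, hL⟩ := hlim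
  have hdiss : ∀ t ∈ Ioi (0 : ℝ),
      qf (kron2 !![0,1;1,0] (P t) + kron2 !![0,0;0,1] (P' t)) (Sum.elim (x' t) (x t)) ≤
        -(qf (kron2 Ψ (Q t)) (Sum.elim (x' t) (x t)) + qf Pi (Sum.elim (y t) (u t))) := by
    intro t ht
    have ht' : t ∈ Ici 0 := Ioi_subset_Ici_self ht
    have h := qf_add_qf_nonpos_of_posSemidef_neg (hLMI t ht') (Sum.elim (x t) (u t))
    rw [fromBlocks_one_zero_mulVec_sumElim, fromBlocks_zero_one_mulVec_sumElim, qf_add,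
      ← hode t ht', ← hy t ht'] at h
    linarith
  have h := sub_le_integral_Ioi_of_hasDerivAt_of_le
    (fun t ht => hasDerivAt_qf_kron2 (hP t ht) (hx t ht)) hdiss (hIQCint.add hPerfInt).neg hL
  rw [integral_neg, integral_add hIQCint hPerfInt, hx0] at h
  have hV0 : qf (P 0) 0 = 0 := by simp [qf]
  linarith

/-- Extension of the gKYP lemma to LPV systems (sufficiency direction of Theorem 2). -/
theorem gKYP_extension_LPV
    {n p q : ℕ} (hn : 0 < n) (hp : 0 < p) (hq : 0 < q)
    (A : ℝ → Matrix (Fin n) (Fin n) ℂ) (B : ℝ → Matrix (Fin n) (Fin p) ℂ)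
    (C : ℝ → Matrix (Fin q) (Fin n) ℂ) (D : ℝ → Matrix (Fin q) (Fin p) ℂ)
    (hA : ContinuousOn A (Set.Ici 0)) (hB : ContinuousOn B (Set.Ici 0))
    (hC : ContinuousOn C (Set.Ici 0)) (hD : ContinuousOn D (Set.Ici 0))
    (x : ℝ → Fin n → ℂ) (x' : ℝ → Fin n → ℂ)
    (hx : ∀ t ∈ Set.Ici (0:ℝ), HasDerivAt x (x' t) t)
    (hx'c : ContinuousOn x' (Set.Ici 0))
    (hx0 : x 0 = 0)
    (u : ℝ → Fin p → ℂ) (hu : ContinuousOn u (Set.Ici 0))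
    (hode : ∀ t ∈ Set.Ici (0:ℝ), x' t = (A t).mulVec (x t) + (B t).mulVec (u t))
    (y : ℝ → Fin q → ℂ)
    (hy : ∀ t ∈ Set.Ici (0:ℝ), y t = (C t).mulVec (x t) + (D t).mulVec (u t))
    (Pi : Matrix (Fin q ⊕ Fin p) (Fin q ⊕ Fin p) ℂ) (hPi : Pi.IsHermitian)
    (Ψ : Matrix (Fin 2) (Fin 2) ℂ) (hΨ : Ψ.IsHermitian)
    (P P' : ℝ → Matrix (Fin n) (Fin n) ℂ)
    (hP : ∀ t ∈ Set.Ici (0:ℝ), HasDerivAt P (P' t) t)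
    (hPH : ∀ t ∈ Set.Ici (0:ℝ), (P t).IsHermitian)
    (Q : ℝ → Matrix (Fin n) (Fin n) ℂ)
    (hQc : ContinuousOn Q (Set.Ici 0))
    (hQ : ∀ t ∈ Set.Ici (0:ℝ), (Q t).PosSemidef)
    -- (i) the pointwise LMI
    (hLMI : ∀ t ∈ Set.Ici (0:ℝ),
      Matrix.PosSemidef
        (-((Matrix.fromBlocks (A t) (B t) (1 : Matrix (Fin n) (Fin n) ℂ) 0)ᴴ *
              (kron2 !![0,1;1,0] (P t) + kron2 !![0,0;0,1] (P' t) + kron2 Ψ (Q t)) *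
              Matrix.fromBlocks (A t) (B t) 1 0 +
            (Matrix.fromBlocks (C t) (D t) 0 (1 : Matrix (Fin p) (Fin p) ℂ))ᴴ * Pi *
              Matrix.fromBlocks (C t) (D t) 0 1)))
    -- (ii) the frequency-dependent IQC
    (hIQCint : IntegrableOn
      (fun t => qf (kron2 Ψ (Q t)) (Sum.elim (x' t) (x t))) (Set.Ioi 0))
    (hIQC : 0 ≤ ∫ t in Set.Ioi (0:ℝ), qf (kron2 Ψ (Q t)) (Sum.elim (x' t) (x t)))
    -- (iii) integrability of the performance integrand
    (hPerfInt : IntegrableOn (fun t => qf Pi (Sum.elim (y t) (u t))) (Set.Ioi 0))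
    -- (iv) the storage function has a nonnegative limit
    (hlim : ∃ L : ℝ, 0 ≤ L ∧
      Filter.Tendsto (fun T => qf (P T) (x T)) Filter.atTop (nhds L)) :
    ∫ t in Set.Ioi (0:ℝ), qf Pi (Sum.elim (y t) (u t)) ≤ 0 :=
  gKYP_extension_LPV_general A B C D x x' hx hx0 u hode y hy Pi Ψ P P' hP Q hLMI hIQCint hIQC
    hPerfInt hlim
end

section
/- Uniform BIBS stability implies a uniform L¹ bound on the input-to-state kernel (Lemma 7, item (2)). Let Φ be a continuous function assigning to each pair (t,τ) with 0 ≤ τ ≤ t a matrix Φ(t,τ) ∈ ℝ^{n×n}, and let B : [0,∞) → ℝ^{n×p} be continuous. Suppose there exists η ≥ 0 such that for every measurable function u : [0,∞) → ℝ^p with ‖u(τ)‖ ≤ 1 for all τ, and for every t ≥ 0, ‖∫₀^t Φ(t,τ) B(τ) u(τ) dτ‖ ≤ η. Then there exists a constant n₂ ≥ 0 such that ∫₀^t ‖Φ(t,τ) B(τ)‖ dτ ≤ n₂ for all t ≥ 0. -/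
open Matrix MeasureTheory
open scoped Matrix.Norms.L2Operator

/-- The Euclidean norm of a real vector. -/
noncomputable def eucNorm {n : ℕ} (v : Fin n → ℝ) : ℝ :=
  Real.sqrt (∑ i, v i ^ 2)

/-!
Fix `t ≥ 0` and write `K τ = Φ t τ * B τ`. Feeding in the admissible input
`u τ = sign (K τ i j) • e_j` makes the `i`-th coordinate of the response equal to
`∫₀ᵗ |K τ i j|`, so each entry of the kernel has `L¹` norm at most `η`. Since the operator norm
of a matrix is bounded by the sum of the absolute values of its entries, `n₂ = n p η` works.
-/

theorem monotone_coe_sign {α : Type*} [Ring α] [LinearOrder α] [IsStrictOrderedRing α] :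
    Monotone fun x : α => (SignType.sign x : α) := by
  intro a b h
  rcases lt_trichotomy a 0 with ha | rfl | ha <;> rcases lt_trichotomy b 0 with hb | rfl | hb <;>
    simp [sign_neg, sign_pos, *] <;> order

theorem abs_le_eucNorm {n : ℕ} (v : Fin n → ℝ) (i : Fin n) : |v i| ≤ eucNorm v := by
  rw [eucNorm, ← Real.sqrt_sq_eq_abs]
  exact Real.sqrt_le_sqrt (Finset.single_le_sum (fun k _ => sq_nonneg (v k)) (Finset.mem_univ i))

theorem eucNorm_single {n : ℕ} (j : Fin n) (c : ℝ) : eucNorm (Pi.single j c) = |c| := by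
  simp [eucNorm, Pi.single_apply, Real.sqrt_sq_eq_abs]

theorem EuclideanSpace.norm_le_sum_abs {ι : Type*} [Fintype ι] (x : EuclideanSpace ℝ ι) :
    ‖x‖ ≤ ∑ i, |x i| := by
  rw [EuclideanSpace.norm_eq, Real.sqrt_le_left (by positivity)]
  simpa only [Real.norm_eq_abs, sq_abs] using
    Finset.sum_sq_le_sq_sum_of_nonneg (s := Finset.univ) fun i _ => abs_nonneg (x i)

theorem Matrix.l2_opNorm_le_sum_abs {m n : Type*} [Fintype m] [Fintype n] [DecidableEq n]
    (A : Matrix m n ℝ) : ‖A‖ ≤ ∑ i, ∑ j, |A i j| := by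
  rw [l2_opNorm_def]
  refine ContinuousLinearMap.opNorm_le_bound _ (by positivity) fun x => ?_
  calc _ ≤ ∑ i, |(A *ᵥ x) i| := EuclideanSpace.norm_le_sum_abs _
    _ ≤ ∑ i, ∑ j, |A i j| * ‖x‖ := by
        gcongr with i
        refine (Finset.abs_sum_le_sum_abs _ _).trans (Finset.sum_le_sum fun j _ => ?_)
        rw [abs_mul]
        gcongr
        exact PiLp.norm_apply_le x j
    _ = _ := by simp only [Finset.sum_mul]

theorem IntervalIntegrable.matrix_entry {m n : Type*} [Fintype m] [Fintype n] [DecidableEq n]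
    {G : ℝ → Matrix m n ℝ} {a b : ℝ} {μ : Measure ℝ} (hG : IntervalIntegrable G μ a b)
    (i : m) (j : n) : IntervalIntegrable (fun τ => G τ i j) μ a b :=
  let L := LinearMap.toContinuousLinearMap (entryLinearMap ℝ ℝ i j)
  ⟨L.integrable_comp hG.1, L.integrable_comp hG.2⟩

def HasBoundedResponse {n p : ℕ} (G : ℝ → Matrix (Fin n) (Fin p) ℝ) (a b η : ℝ) : Prop :=
  ∀ u : ℝ → Fin p → ℝ, Measurable u → (∀ τ, eucNorm (u τ) ≤ 1) →
    eucNorm (∫ τ in a..b, G τ *ᵥ u τ) ≤ η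

namespace HasBoundedResponse

variable {n p : ℕ} {G : ℝ → Matrix (Fin n) (Fin p) ℝ} {a b η : ℝ}

theorem congr {K : ℝ → Matrix (Fin n) (Fin p) ℝ} (hG : HasBoundedResponse G a b η)
    (hGK : Set.EqOn G K (Set.uIcc a b)) : HasBoundedResponse K a b η := fun u hu hu1 => by
  rw [← intervalIntegral.integral_congr fun τ hτ => congrArg (· *ᵥ u τ) (hGK hτ)]
  exact hG u hu hu1

theorem integral_abs_apply_le (hG : HasBoundedResponse G a b η)
    (hGi : IntervalIntegrable G volume a b) {i : Fin n} {j : Fin p}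
    (hGij : Measurable fun τ => G τ i j) :
    ∫ τ in a..b, |G τ i j| ≤ η := by
  set s : ℝ → ℝ := fun τ => SignType.sign (G τ i j)
  have hs : Measurable s := monotone_coe_sign.measurable.comp hGij
  have hs_le : ∀ τ, ‖s τ‖ ≤ 1 := fun τ => by
    rcases (SignType.sign (G τ i j)).trichotomy with h | h | h <;> simp [s, h]
  set u : ℝ → Fin p → ℝ := fun τ => Pi.single j (s τ)
  have hu : Measurable u := measurable_pi_lambda _ fun k => by
    by_cases hk : k = j
    · subst hk; simpa [u] using hs
    · simp [u, hk]
  have hGu : ∀ τ, G τ *ᵥ u τ = s τ • fun k => G τ k j := fun τ => by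
    ext k; simp [u, mul_comm]
  have hGu_int : IntervalIntegrable (fun τ => G τ *ᵥ u τ) volume a b := by
    have hcol : IntegrableOn (fun τ k => G τ k j) (Set.uIoc a b) :=
      Integrable.of_eval fun k => intervalIntegrable_iff.1 (hGi.matrix_entry k j)
    rw [funext hGu, intervalIntegrable_iff]
    exact hcol.bdd_smul 1 hs.aestronglyMeasurable (ae_of_all _ hs_le)
  have hGu_apply : (∫ τ in a..b, G τ *ᵥ u τ) i = ∫ τ in a..b, |G τ i j| := by
    have := (ContinuousLinearMap.proj (R := ℝ) (φ := fun _ : Fin n => ℝ) i)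
      |>.intervalIntegral_comp_comm hGu_int
    simp only [ContinuousLinearMap.proj_apply] at this
    rw [← this]
    congr 1 with τ
    rw [hGu τ, Pi.smul_apply, smul_eq_mul, mul_comm]
    exact self_mul_sign _
  calc ∫ τ in a..b, |G τ i j| ≤ |(∫ τ in a..b, G τ *ᵥ u τ) i| := hGu_apply ▸ le_abs_self _
    _ ≤ eucNorm (∫ τ in a..b, G τ *ᵥ u τ) := abs_le_eucNorm _ i
    _ ≤ η := hG u hu fun τ => (eucNorm_single j (s τ)).trans_le (hs_le τ)

theorem integral_l2_opNorm_le (hG : HasBoundedResponse G a b η) (hab : a ≤ b)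
    (hGi : IntervalIntegrable G volume a b) (hGm : ∀ i j, Measurable fun τ => G τ i j) :
    ∫ τ in a..b, ‖G τ‖ ≤ n * p * η := by
  have hrow : ∀ i, IntervalIntegrable (fun τ => ∑ j, |G τ i j|) volume a b := fun i => by
    simpa only [Finset.sum_fn] using
      IntervalIntegrable.sum .univ fun j _ => (hGi.matrix_entry i j).abs
  have hsum : IntervalIntegrable (fun τ => ∑ i, ∑ j, |G τ i j|) volume a b := by
    simpa only [Finset.sum_fn] using IntervalIntegrable.sum .univ fun i _ => hrow i
  calc ∫ τ in a..b, ‖G τ‖ ≤ ∫ τ in a..b, ∑ i, ∑ j, |G τ i j| :=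
        intervalIntegral.integral_mono_on hab hGi.norm hsum
          fun τ _ => l2_opNorm_le_sum_abs (G τ)
    _ = ∑ i, ∑ j, ∫ τ in a..b, |G τ i j| := by
        rw [intervalIntegral.integral_finsetSum fun i _ => hrow i]
        exact Finset.sum_congr rfl fun i _ => intervalIntegral.integral_finsetSum
          fun j _ => (hGi.matrix_entry i j).abs
    _ ≤ ∑ _i : Fin n, ∑ _j : Fin p, η := by
        gcongr with i _ j _
        exact hG.integral_abs_apply_le hGi (hGm i j)
    _ = n * p * η := by
        simp only [Finset.sum_const, Finset.card_univ, Fintype.card_fin, nsmul_eq_mul]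
        ring

end HasBoundedResponse

/-- Uniform BIBS stability implies a uniform L¹ bound on the input-to-state
kernel (Lemma 7, item (2)).  Here `‖·‖` on matrices is the operator norm
induced by the Euclidean norm (the scoped `Matrix.L2OpNorm` instance). -/
theorem BIBS_implies_L1_kernel_bound
    {n p : ℕ} (Φ : ℝ → ℝ → Matrix (Fin n) (Fin n) ℝ)
    (hΦcont : ContinuousOn (fun z : ℝ × ℝ => Φ z.1 z.2)
      {z : ℝ × ℝ | 0 ≤ z.2 ∧ z.2 ≤ z.1})
    (B : ℝ → Matrix (Fin n) (Fin p) ℝ) (hB : ContinuousOn B (Set.Ici 0))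
    (η : ℝ) (hη : 0 ≤ η)
    (hBIBS : ∀ u : ℝ → Fin p → ℝ, Measurable u →
      (∀ τ : ℝ, eucNorm (u τ) ≤ 1) →
      ∀ t : ℝ, 0 ≤ t →
        eucNorm (∫ τ in (0:ℝ)..t, (Φ t τ * B τ).mulVec (u τ)) ≤ η) :
    ∃ n₂ : ℝ, 0 ≤ n₂ ∧ ∀ t : ℝ, 0 ≤ t →
      (∫ τ in (0:ℝ)..t, ‖Φ t τ * B τ‖) ≤ n₂ := by
  refine ⟨n * p * η, by positivity, fun t ht => ?_⟩
  -- clamping `τ` to `[0, t]` extends the kernel `τ ↦ Φ t τ * B τ` continuously to all of `ℝ`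
  set c : ℝ → ℝ := fun τ => Set.projIcc 0 t ht τ
  have hc : Continuous c := continuous_subtype_val.comp continuous_projIcc
  set G : ℝ → Matrix (Fin n) (Fin p) ℝ := fun τ => Φ t (c τ) * B (c τ)
  have hG : Continuous G :=
    (hΦcont.comp_continuous (continuous_const.prodMk hc) fun τ => (Set.projIcc 0 t ht τ).2)
      |>.matrix_mul (hB.comp_continuous hc fun τ => (Set.projIcc 0 t ht τ).2.1)
  have hKG : Set.EqOn (fun τ => Φ t τ * B τ) G (Set.uIcc 0 t) := fun τ hτ => by
    rw [Set.uIcc_of_le ht] at hτ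
    simp only [G, c, Set.projIcc_of_mem ht hτ]
  have hresp : HasBoundedResponse (fun τ => Φ t τ * B τ) 0 t η := fun u hu hu1 =>
    hBIBS u hu hu1 t ht
  rw [intervalIntegral.integral_congr fun τ hτ => congrArg norm (hKG hτ)]
  exact (hresp.congr hKG).integral_l2_opNorm_le ht (hG.intervalIntegrable 0 t)
    fun i j => (hG.matrix_elem i j).measurable
end

section
/- Decomposition of the per-frequency forced response of an LPV system (equations (x-Dx)/(V-LPV)). Let p : [0,∞) → ℝ^l be continuously differentiable, let A : ℝ^l → ℂ^{n×n} and B : ℝ^l → ℂ^{n×p} be continuously differentiable, and let Φ be a state transition matrix for A∘p, i.e. Φ(t,τ) ∈ ℂ^{n×n} is jointly continuous in (t,τ), for each fixed t the map τ ↦ Φ(t,τ) is differentiable with ∂Φ(t,τ)/∂τ = −Φ(t,τ) A(p(τ)), and Φ(t,t) = I for all t. Fix t ≥ 0 and ω ∈ ℝ such that iωI − A(p(t)) is invertible, and write R = (iωI − A(p(t)))^{-1}. Then ∫₀^t Φ(t,τ) B(p(τ)) e^{iωτ} dτ = e^{iωt} R B(p(t)) − Φ(t,0) R B(p(0)) −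 ∫₀^t Φ(t,τ) (A(p(t)) − A(p(τ))) e^{iωτ} R B(p(τ)) dτ − ∫₀^t Φ(t,τ) e^{iωτ} R · (d/dτ)(B(p(τ))) dτ; that is, the forced response per unit frequency component equals V_p¹(iω) + V_p²(iω) + V_{ṗ}¹(iω) + V_{ṗ}²(iω) as defined in the paper. -/
/-!
With `R = (c • 1 - A₀)⁻¹`, the potential `F τ = exp (c τ) • (Φ τ * R * B τ)` has derivative
`exp (c τ) • (Φ B + Φ (A₀ - A τ) R B + Φ R B')`: differentiating `Φ` contributes `-Φ A(τ) R B`,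
and the resolvent identity `c • R = 1 + A₀ R` splits the derivative of the exponential into the
forced term `Φ B` plus `Φ A₀ R B`. Integrating `F'` over `[t₀, t]` gives the decomposition.
-/

open Matrix MeasureTheory
open scoped Matrix.Norms.L2Operator

theorem HasDerivAt.matrix_mul {l m n : Type*} [Fintype l] [Fintype m] [Fintype n]
    [DecidableEq m] [DecidableEq n] {f : ℝ → Matrix l m ℂ} {g : ℝ → Matrix m n ℂ}
    {f' : Matrix l m ℂ} {g' : Matrix m n ℂ} {x : ℝ}
    (hf : HasDerivAt f f' x) (hg : HasDerivAt g g' x) :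
    HasDerivAt (fun y => f y * g y) (f' * g x + f x * g') x := by
  have := (mulLinearMap (l := l) (m := m) (n := n) (A := ℂ) ℝ).toContinuousBilinearMap
    |>.hasDerivAt_of_bilinear (u := f) (v := g) (fun _ => hf) (fun _ => hg)
  simpa [add_comm] using this

variable {n m : Type*} [Fintype n] [DecidableEq n]

theorem Matrix.smul_inv_eq_one_add_mul_inv {R : Type*} [CommRing R] {A : Matrix n n R} {c : R}
    (h : IsUnit (c • 1 - A)) : c • (c • 1 - A)⁻¹ = 1 + A * (c • 1 - A)⁻¹ := by
  have hmul := Matrix.mul_nonsing_inv _ ((Matrix.isUnit_iff_isUnit_det _).mp h)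
  rw [Matrix.sub_mul, Matrix.smul_mul, Matrix.one_mul] at hmul
  exact sub_eq_iff_eq_add.mp hmul

variable [Fintype m] [DecidableEq m]

theorem hasDerivAt_cexp_smul_mul_inv_mul {φ : ℝ → Matrix n n ℂ} {b : ℝ → Matrix n m ℂ}
    {A A₀ : Matrix n n ℂ} {b' : Matrix n m ℂ} {c : ℂ} {τ : ℝ}
    (hφ : HasDerivAt φ (-(φ τ * A)) τ) (hb : HasDerivAt b b' τ) (hA₀ : IsUnit (c • 1 - A₀)) :
    HasDerivAt (fun s : ℝ => Complex.exp (c * s) • (φ s * (c • 1 - A₀)⁻¹ * b s))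
      (Complex.exp (c * τ) • (φ τ * b τ) +
        Complex.exp (c * τ) • (φ τ * (A₀ - A) * (c • 1 - A₀)⁻¹ * b τ) +
        Complex.exp (c * τ) • (φ τ * (c • 1 - A₀)⁻¹ * b')) τ := by
  have hres := Matrix.smul_inv_eq_one_add_mul_inv hA₀
  set R := (c • 1 - A₀)⁻¹
  have hexp : HasDerivAt (fun s : ℝ => Complex.exp (c * s)) (Complex.exp (c * τ) * c) τ := by
    simpa using ((hasDerivAt_id τ).ofReal_comp.const_mul c).cexp
  have hprod : HasDerivAt (fun s => φ s * R * b s) (-(φ τ * A) * R * b τ + φ τ * R * b') τ := by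
    simpa using (hφ.matrix_mul (hasDerivAt_const τ R)).matrix_mul hb
  have hR : c • (φ τ * R * b τ) = φ τ * b τ + φ τ * A₀ * R * b τ := by
    rw [← Matrix.smul_mul, ← Matrix.mul_smul, hres, Matrix.mul_add, Matrix.add_mul, Matrix.mul_one,
      Matrix.mul_assoc (φ τ) A₀ R]
  refine (hexp.smul (F := Matrix n m ℂ) hprod).congr_deriv ?_
  rw [mul_smul, ← smul_add, ← smul_add, ← smul_add, hR, Matrix.mul_sub, Matrix.sub_mul,
    Matrix.sub_mul, Matrix.neg_mul, Matrix.neg_mul]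
  congr 1
  abel

theorem integral_cexp_smul_mul_eq {φ a : ℝ → Matrix n n ℂ} {b : ℝ → Matrix n m ℂ}
    {A₀ : Matrix n n ℂ} {c : ℂ} (hφ : ∀ τ, HasDerivAt φ (-(φ τ * a τ)) τ) (ha : Continuous a)
    (hb : ContDiff ℝ 1 b) (hA₀ : IsUnit (c • 1 - A₀)) (t₀ t : ℝ) :
    ∫ τ in t₀..t, Complex.exp (c * τ) • (φ τ * b τ) =
      Complex.exp (c * t) • (φ t * (c • 1 - A₀)⁻¹ * b t) -
        Complex.exp (c * t₀) • (φ t₀ * (c • 1 - A₀)⁻¹ * b t₀) -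
        (∫ τ in t₀..t, Complex.exp (c * τ) • (φ τ * (A₀ - a τ) * (c • 1 - A₀)⁻¹ * b τ)) -
        ∫ τ in t₀..t, Complex.exp (c * τ) • (φ τ * (c • 1 - A₀)⁻¹ * deriv b τ) := by
  have hφc : Continuous φ := continuous_iff_continuousAt.2 fun τ => (hφ τ).continuousAt
  have hexp : Continuous fun τ : ℝ => Complex.exp (c * τ) := by fun_prop
  have hbc := hb.continuous
  have hb'c := hb.continuous_deriv le_rfl
  have i₁ : IntervalIntegrable (fun τ => Complex.exp (c * τ) • (φ τ * b τ)) volume t₀ t :=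
    (hexp.smul (hφc.matrix_mul hbc)).intervalIntegrable _ _
  have i₂ : IntervalIntegrable
      (fun τ => Complex.exp (c * τ) • (φ τ * (A₀ - a τ) * (c • 1 - A₀)⁻¹ * b τ)) volume t₀ t :=
    (hexp.smul (((hφc.matrix_mul (continuous_const.sub ha)).matrix_mul continuous_const).matrix_mul
      hbc)).intervalIntegrable _ _
  have i₃ : IntervalIntegrable
      (fun τ => Complex.exp (c * τ) • (φ τ * (c • 1 - A₀)⁻¹ * deriv b τ)) volume t₀ t :=
    (hexp.smul ((hφc.matrix_mul continuous_const).matrix_mul hb'c)).intervalIntegrable _ _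
  have hFTC := intervalIntegral.integral_eq_sub_of_hasDerivAt
    (fun τ _ => hasDerivAt_cexp_smul_mul_inv_mul (hφ τ)
      ((hb.differentiable one_ne_zero) τ).hasDerivAt hA₀) ((i₁.add i₂).add i₃)
  rw [intervalIntegral.integral_add (i₁.add i₂) i₃, intervalIntegral.integral_add i₁ i₂] at hFTC
  rw [← hFTC]
  abel

theorem LPV_forced_response_decomposition_general
    {l n m : ℕ}
    (ρ : ℝ → Fin l → ℝ) (hρ : ContDiff ℝ 1 ρ)
    (A : (Fin l → ℝ) → Matrix (Fin n) (Fin n) ℂ) (hA : ContDiff ℝ 1 A)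
    (B : (Fin l → ℝ) → Matrix (Fin n) (Fin m) ℂ) (hB : ContDiff ℝ 1 B)
    (Φ : ℝ → ℝ → Matrix (Fin n) (Fin n) ℂ)
    (hΦτ : ∀ t τ : ℝ, HasDerivAt (fun s => Φ t s) (-(Φ t τ * A (ρ τ))) τ)
    (hΦdiag : ∀ t : ℝ, Φ t t = 1)
    (t : ℝ) (ω : ℝ)
    (hω : (Complex.I * ω) ∉ spectrum ℂ (A (ρ t))) :
    (∫ τ in (0:ℝ)..t, Complex.exp (Complex.I * ω * τ) • (Φ t τ * B (ρ τ))) =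
      Complex.exp (Complex.I * ω * t) •
          (((Complex.I * ω) • (1 : Matrix (Fin n) (Fin n) ℂ) - A (ρ t))⁻¹ * B (ρ t)) -
        Φ t 0 * ((Complex.I * ω) • (1 : Matrix (Fin n) (Fin n) ℂ) - A (ρ t))⁻¹ * B (ρ 0) -
        (∫ τ in (0:ℝ)..t, Complex.exp (Complex.I * ω * τ) •
          (Φ t τ * (A (ρ t) - A (ρ τ)) *
            ((Complex.I * ω) • (1 : Matrix (Fin n) (Fin n) ℂ) - A (ρ t))⁻¹ * B (ρ τ))) -
        (∫ τ in (0:ℝ)..t, Complex.exp (Complex.I * ω * τ) •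
          (Φ t τ * ((Complex.I * ω) • (1 : Matrix (Fin n) (Fin n) ℂ) - A (ρ t))⁻¹ *
            deriv (fun s => B (ρ s)) τ)) := by
  have hunit : IsUnit ((Complex.I * ω) • (1 : Matrix (Fin n) (Fin n) ℂ) - A (ρ t)) := by
    simpa [Algebra.algebraMap_eq_smul_one] using spectrum.notMem_iff.mp hω
  have h := integral_cexp_smul_mul_eq (hΦτ t) (hA.continuous.comp hρ.continuous) (hB.comp hρ)
    hunit 0 t
  rwa [hΦdiag, Matrix.one_mul, Complex.ofReal_zero, mul_zero, Complex.exp_zero, one_smul] at h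

/-- Decomposition of the per-frequency forced response of an LPV system
(equations (x-Dx)/(V-LPV)). -/
theorem LPV_forced_response_decomposition
    {l n m : ℕ}
    (ρ : ℝ → Fin l → ℝ) (hρ : ContDiff ℝ 1 ρ)
    (A : (Fin l → ℝ) → Matrix (Fin n) (Fin n) ℂ) (hA : ContDiff ℝ 1 A)
    (B : (Fin l → ℝ) → Matrix (Fin n) (Fin m) ℂ) (hB : ContDiff ℝ 1 B)
    (Φ : ℝ → ℝ → Matrix (Fin n) (Fin n) ℂ)
    (hΦcont : Continuous (fun z : ℝ × ℝ => Φ z.1 z.2))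
    (hΦτ : ∀ t τ : ℝ, HasDerivAt (fun s => Φ t s) (-(Φ t τ * A (ρ τ))) τ)
    (hΦdiag : ∀ t : ℝ, Φ t t = 1)
    (t : ℝ) (ht : 0 ≤ t) (ω : ℝ)
    (hω : (Complex.I * ω) ∉ spectrum ℂ (A (ρ t))) :
    (∫ τ in (0:ℝ)..t, Complex.exp (Complex.I * ω * τ) • (Φ t τ * B (ρ τ))) =
      Complex.exp (Complex.I * ω * t) •
          (((Complex.I * ω) • (1 : Matrix (Fin n) (Fin n) ℂ) - A (ρ t))⁻¹ * B (ρ t)) -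
        Φ t 0 * ((Complex.I * ω) • (1 : Matrix (Fin n) (Fin n) ℂ) - A (ρ t))⁻¹ * B (ρ 0) -
        (∫ τ in (0:ℝ)..t, Complex.exp (Complex.I * ω * τ) •
          (Φ t τ * (A (ρ t) - A (ρ τ)) *
            ((Complex.I * ω) • (1 : Matrix (Fin n) (Fin n) ℂ) - A (ρ t))⁻¹ * B (ρ τ))) -
        (∫ τ in (0:ℝ)..t, Complex.exp (Complex.I * ω * τ) •
          (Φ t τ * ((Complex.I * ω) • (1 : Matrix (Fin n) (Fin n) ℂ) - A (ρ t))⁻¹ *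
            deriv (fun s => B (ρ s)) τ)) :=
  LPV_forced_response_decomposition_general ρ hρ A hA B hB Φ hΦτ hΦdiag t ω hω
end

section
/- Lyapunov differential inequality for the factored Gramian (Remark containing equations (Lya_W_dp)). Let A : [0,∞) → ℂ^{n×n} be continuous, let M : [0,∞) → ℂ^{n×n} be continuous, and let Φ be a state transition matrix for A as above: Φ jointly continuous on {(t,τ) : 0 ≤ τ ≤ t}, t ↦ Φ(t,τ) differentiable with ∂Φ(t,τ)/∂t = A(t) Φ(t,τ), Φ(τ,τ) = I, with ∂Φ/∂t jointly continuous. Define F(t) = ∫₀^t Φ(t,τ) M(τ) dτ and W(t) = F(t) F(t)^*. Suppose M̄ ∈ ℂ^{n×n} is Hermitian with M(t) M(t)^* ⪯ M̄ for all t ≥ 0. Then W is differentiable on (0,∞) and for every t > 0, W'(t) ⪯ A(t) W(t) + W(t) A(t)^* + W(t) + M̄. -/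
open Matrix MeasureTheory
open scoped ComplexOrder Matrix.Norms.L2Operator

open Set Filter Topology intervalIntegral
open scoped Interval

/-!
Differentiating `F t = ∫₀ᵗ Φ(t,τ) M(τ) dτ` by the Leibniz rule gives `F' = M + A F`, hence
`W' = (M + A F) Fᴴ + F (M + A F)ᴴ`, and completing the square,
`A W + W Aᴴ + W + M̄ - W' = (F - M)(F - M)ᴴ + (M̄ - M Mᴴ) ⪰ 0`.

Since `Φ(s,τ)` is only controlled for `τ ≤ s`, the Leibniz rule is proved through the kernel
`K(max s τ, τ)`, which for `τ ≥ s` is the diagonal value `K(τ,τ)`, independent of `s`. Thus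
`∫ₐˢ K(s,τ) dτ = ∫ₐᵀ K(max s τ, τ) dτ - ∫ₛᵀ K(τ,τ) dτ`: the first integral has fixed limits and
an integrand that is Lipschitz in `s` and differentiable at `t` for every `τ ≠ t`, the second is
handled by the fundamental theorem of calculus.
-/

section Leibniz

theorem continuousOn_comp_max {E : Type*} [TopologicalSpace E] {K : ℝ → ℝ → E} {a : ℝ}
    (hK : ContinuousOn (fun z : ℝ × ℝ => K z.1 z.2) {z | a ≤ z.2 ∧ z.2 ≤ z.1}) :
    ContinuousOn (fun z : ℝ × ℝ => K (max z.1 z.2) z.2) {z | a ≤ z.2} :=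
  hK.comp (show Continuous fun z : ℝ × ℝ => (max z.1 z.2, z.2) by fun_prop).continuousOn
    fun _ hz => ⟨hz, le_max_right _ _⟩

theorem continuousOn_comp_max_slice {E : Type*} [TopologicalSpace E] {K : ℝ → ℝ → E} {a : ℝ}
    (hK : ContinuousOn (fun z : ℝ × ℝ => K z.1 z.2) {z | a ≤ z.2 ∧ z.2 ≤ z.1}) (s : ℝ) :
    ContinuousOn (fun τ => K (max s τ) τ) (Ici a) :=
  (continuousOn_comp_max hK).comp (show Continuous fun τ : ℝ => (s, τ) by fun_prop).continuousOn
    fun _ hτ => hτ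

variable {E : Type*} [NormedAddCommGroup E] [NormedSpace ℝ E]

theorem lipschitzOnWith_comp_max {f f' : ℝ → E} {τ T C : ℝ} (hτT : τ ≤ T)
    (hf : ∀ s ∈ Icc τ T, HasDerivAt f (f' s) s) (hC : ∀ s ∈ Icc τ T, ‖f' s‖ ≤ C) :
    LipschitzOnWith (Real.nnabs C) (fun s => f (max s τ)) (Iic T) := by
  have hf_lip : LipschitzOnWith (Real.nnabs C) f (Icc τ T) :=
    (convex_Icc τ T).lipschitzOnWith_of_nnnorm_hasDerivWithin_le
      (fun s hs => (hf s hs).hasDerivWithinAt) fun s hs => by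
        rw [← NNReal.coe_le_coe, coe_nnnorm, Real.coe_nnabs]
        exact (hC s hs).trans (le_abs_self C)
  simpa [Function.comp_def] using
    hf_lip.comp ((LipschitzWith.id.max_const τ).lipschitzOnWith (s := Iic T))
      fun s hs => ⟨le_max_right s τ, max_le hs hτT⟩

theorem hasDerivAt_comp_max_of_lt {f : ℝ → E} {f' : E} {τ t : ℝ} (h : τ < t)
    (hf : HasDerivAt f f' t) : HasDerivAt (fun s => f (max s τ)) f' t :=
  hf.congr_of_eventuallyEq <| by
    filter_upwards [Ioi_mem_nhds h] with s hs
    rw [max_eq_left hs.le]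

theorem hasDerivAt_comp_max_of_gt (f : ℝ → E) {τ t : ℝ} (h : t < τ) :
    HasDerivAt (fun s => f (max s τ)) 0 t :=
  (hasDerivAt_const t (f τ)).congr_of_eventuallyEq <| by
    filter_upwards [Iio_mem_nhds h] with s hs
    rw [max_eq_right hs.le]

theorem hasDerivAt_integral_comp_max [CompleteSpace E] {K K' : ℝ → ℝ → E} {a t T : ℝ}
    (hat : a < t) (htT : t < T)
    (hK : ContinuousOn (fun z : ℝ × ℝ => K z.1 z.2) {z | a ≤ z.2 ∧ z.2 ≤ z.1})
    (hK' : ContinuousOn (fun z : ℝ × ℝ => K' z.1 z.2) {z | a ≤ z.2 ∧ z.2 ≤ z.1})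
    (hderiv : ∀ τ s, a ≤ τ → τ ≤ s → HasDerivAt (fun s => K s τ) (K' s τ) s) :
    HasDerivAt (fun s => ∫ τ in a..T, K (max s τ) τ) (∫ τ in a..t, K' t τ) t := by
  have hΙ : Ι a T = Ioc a T := uIoc_of_le (by linarith)
  have hΙa : Ι a T ⊆ Ici a := hΙ ▸ Ioc_subset_Ioi_self.trans Ioi_subset_Ici_self
  obtain ⟨C, hC⟩ : ∃ C, ∀ z ∈ Icc a T ×ˢ Icc a T, ‖K' (max z.1 z.2) z.2‖ ≤ C :=
    (isCompact_Icc.prod isCompact_Icc).exists_bound_of_continuousOn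
      ((continuousOn_comp_max hK').mono fun z hz => hz.2.1)
  have hlip : ∀ τ ∈ Ι a T, LipschitzOnWith (Real.nnabs C) (fun s => K (max s τ) τ) (Iic T) := by
    intro τ hτ
    rw [hΙ] at hτ
    refine lipschitzOnWith_comp_max hτ.2 (fun s hs => hderiv τ s hτ.1.le hs.1) fun s hs => ?_
    simpa [max_eq_left hs.1] using hC (s, τ) ⟨⟨hτ.1.le.trans hs.1, hs.2⟩, ⟨hτ.1.le, hτ.2⟩⟩
  have hdiff : ∀ τ ∈ Ι a T, τ ≠ t → HasDerivAt (fun s => K (max s τ) τ)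
      ((Iic t).indicator (fun τ => K' (max t τ) τ) τ) t := by
    intro τ hτ hτt
    rcases hτt.lt_or_gt with h | h
    · rw [indicator_of_mem (show τ ∈ Iic t from h.le), max_eq_left h.le]
      exact hasDerivAt_comp_max_of_lt h (hderiv τ t (hΙa hτ) h.le)
    · rw [indicator_of_notMem (show τ ∉ Iic t from not_le.mpr h)]
      exact hasDerivAt_comp_max_of_gt (fun s => K s τ) h
  have h := (hasDerivAt_integral_of_dominated_loc_of_lip (Iic_mem_nhds htT)
    (Eventually.of_forall fun s =>
      ((continuousOn_comp_max_slice hK s).mono hΙa).aestronglyMeasurable measurableSet_uIoc)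
    ((continuousOn_comp_max_slice hK t).mono
      fun _ hτ => (le_inf le_rfl (by linarith)).trans hτ.1).intervalIntegrable
    ((((continuousOn_comp_max_slice hK' t).mono hΙa).aestronglyMeasurable
      measurableSet_uIoc).indicator measurableSet_Iic)
    (Eventually.of_forall hlip) (bound := fun _ => C) intervalIntegrable_const
    (by filter_upwards [compl_mem_ae_iff.mpr (measure_singleton (μ := volume) t)] with τ hτt hτ
        exact hdiff τ hτ hτt)).2
  rw [← Iic_def, integral_indicator ⟨hat.le, htT.le⟩] at h
  refine h.congr_deriv (integral_congr fun τ hτ => ?_)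
  rw [uIcc_of_le hat.le] at hτ
  simp only [max_eq_left hτ.2]

theorem integral_eq_integral_comp_max_sub [CompleteSpace E] {K : ℝ → ℝ → E} {a s T : ℝ}
    (has : a ≤ s) (hsT : s ≤ T) (hK : IntervalIntegrable (fun τ => K (max s τ) τ) volume a T) :
    ∫ τ in a..s, K s τ = (∫ τ in a..T, K (max s τ) τ) - ∫ τ in s..T, K τ τ := by
  have h_le : ∫ τ in a..s, K s τ = ∫ τ in a..s, K (max s τ) τ :=
    integral_congr fun τ hτ => by
      rw [uIcc_of_le has] at hτ
      rw [max_eq_left hτ.2]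
  have h_ge : ∫ τ in s..T, K τ τ = ∫ τ in s..T, K (max s τ) τ :=
    integral_congr fun τ hτ => by
      rw [uIcc_of_le hsT] at hτ
      rw [max_eq_right hτ.1]
  rw [h_le, h_ge, eq_sub_iff_add_eq, integral_add_adjacent_intervals
    (hK.mono_set (uIcc_subset_uIcc_left (mem_uIcc_of_le has hsT)))
    (hK.mono_set (uIcc_subset_uIcc_right (mem_uIcc_of_le has hsT)))]

theorem hasDerivAt_integral_of_continuousOn_triangle [CompleteSpace E] {K K' : ℝ → ℝ → E}
    {a t : ℝ} (hat : a < t)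
    (hK : ContinuousOn (fun z : ℝ × ℝ => K z.1 z.2) {z | a ≤ z.2 ∧ z.2 ≤ z.1})
    (hK' : ContinuousOn (fun z : ℝ × ℝ => K' z.1 z.2) {z | a ≤ z.2 ∧ z.2 ≤ z.1})
    (hderiv : ∀ τ s, a ≤ τ → τ ≤ s → HasDerivAt (fun s => K s τ) (K' s τ) s) :
    HasDerivAt (fun s => ∫ τ in a..s, K s τ) (K t t + ∫ τ in a..t, K' t τ) t := by
  have hdiag : ContinuousOn (fun τ => K τ τ) (Ici a) := by
    simpa [Function.comp_def] using (continuousOn_comp_max hK).comp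
      (show Continuous fun τ : ℝ => (τ, τ) by fun_prop).continuousOn
      (fun _ hτ => hτ : MapsTo (fun τ : ℝ => (τ, τ)) (Ici a) {z | a ≤ z.2})
  have hint : ∀ s, IntervalIntegrable (fun τ => K (max s τ) τ) volume a (t + 1) := fun s =>
    ((continuousOn_comp_max_slice hK s).mono
      fun _ hτ => (le_inf le_rfl (by linarith)).trans hτ.1).intervalIntegrable
  have hsplit : ∀ᶠ s in 𝓝 t, ∫ τ in a..s, K s τ =
      (∫ τ in a..t + 1, K (max s τ) τ) - ∫ τ in s..t + 1, K τ τ := by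
    filter_upwards [Ioo_mem_nhds hat (lt_add_one t)] with s hs
    exact integral_eq_integral_comp_max_sub hs.1.le hs.2.le (hint s)
  have hdiag_deriv : HasDerivAt (fun s => ∫ τ in s..t + 1, K τ τ) (-K t t) t :=
    integral_hasDerivAt_left
      ((hdiag.mono fun _ hτ => (le_inf hat.le (by linarith)).trans hτ.1).intervalIntegrable)
      ((hdiag.mono Ioi_subset_Ici_self).stronglyMeasurableAtFilter isOpen_Ioi t hat)
      (hdiag.continuousAt (Ici_mem_nhds hat))
  have h := ((hasDerivAt_integral_comp_max hat (lt_add_one t) hK hK' hderiv).sub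
    hdiag_deriv).congr_of_eventuallyEq hsplit
  rwa [sub_neg_eq_add, add_comm] at h

end Leibniz

theorem hasDerivAt_integral_transition_mul {𝔸 : Type*} [NormedRing 𝔸] [NormedAlgebra ℝ 𝔸]
    [CompleteSpace 𝔸] (A M : ℝ → 𝔸) (Φ : ℝ → ℝ → 𝔸) (hM : ContinuousOn M (Ici 0))
    (hΦcont : ContinuousOn (fun z : ℝ × ℝ => Φ z.1 z.2) {z : ℝ × ℝ | 0 ≤ z.2 ∧ z.2 ≤ z.1})
    (hΦt : ∀ τ : ℝ, 0 ≤ τ → ∀ t : ℝ, τ ≤ t → HasDerivAt (fun s => Φ s τ) (A t * Φ t τ) t)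
    (hΦdiag : ∀ τ : ℝ, Φ τ τ = 1)
    (hΦtcont : ContinuousOn (fun z : ℝ × ℝ => A z.1 * Φ z.1 z.2)
      {z : ℝ × ℝ | 0 ≤ z.2 ∧ z.2 ≤ z.1})
    {t : ℝ} (ht : 0 < t) :
    HasDerivAt (fun s => ∫ τ in (0 : ℝ)..s, Φ s τ * M τ)
      (M t + A t * ∫ τ in (0 : ℝ)..t, Φ t τ * M τ) t := by
  have hM' : ContinuousOn (fun z : ℝ × ℝ => M z.2) {z : ℝ × ℝ | 0 ≤ z.2 ∧ z.2 ≤ z.1} :=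
    hM.comp continuous_snd.continuousOn fun _ hz => hz.1
  have h := hasDerivAt_integral_of_continuousOn_triangle (K' := fun s τ => A s * Φ s τ * M τ) ht
    (hΦcont.mul hM') (hΦtcont.mul hM') fun τ s hτ hs => (hΦt τ hτ s hs).mul_const (M τ)
  have hint : IntervalIntegrable (fun τ => Φ t τ * M τ) volume 0 t :=
    ((hΦcont.mul hM').comp (show Continuous fun τ : ℝ => (t, τ) by fun_prop).continuousOn
      fun τ hτ => by rw [uIcc_of_le ht.le] at hτ; exact hτ).intervalIntegrable
  have hpull : ∫ τ in (0 : ℝ)..t, A t * (Φ t τ * M τ) = A t * ∫ τ in (0 : ℝ)..t, Φ t τ * M τ :=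
    (ContinuousLinearMap.mul ℝ 𝔸 (A t)).intervalIntegral_comp_comm hint
  simp only [hΦdiag, one_mul, mul_assoc] at h
  rwa [hpull] at h

theorem posSemidef_lyapunov_sub {m R : Type*} [Fintype m] [CommRing R] [PartialOrder R]
    [StarRing R] [StarOrderedRing R] {A F M Mbar : Matrix m m R}
    (hMbar : (Mbar - M * Mᴴ).PosSemidef) :
    (A * (F * Fᴴ) + F * Fᴴ * Aᴴ + F * Fᴴ + Mbar -
      ((M + A * F) * Fᴴ + F * (M + A * F)ᴴ)).PosSemidef := by
  have h : A * (F * Fᴴ) + F * Fᴴ * Aᴴ + F * Fᴴ + Mbar -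
      ((M + A * F) * Fᴴ + F * (M + A * F)ᴴ) = (F - M) * (F - M)ᴴ + (Mbar - M * Mᴴ) := by
    simp only [conjTranspose_add, conjTranspose_mul, conjTranspose_sub]
    noncomm_ring
  rw [h]
  exact (posSemidef_self_mul_conjTranspose _).add hMbar

theorem lyapunov_inequality_factored_gramian_general
    {n : ℕ} (A : ℝ → Matrix (Fin n) (Fin n) ℂ)
    (M : ℝ → Matrix (Fin n) (Fin n) ℂ) (hM : ContinuousOn M (Set.Ici 0))
    (Φ : ℝ → ℝ → Matrix (Fin n) (Fin n) ℂ)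
    (hΦcont : ContinuousOn (fun z : ℝ × ℝ => Φ z.1 z.2)
      {z : ℝ × ℝ | 0 ≤ z.2 ∧ z.2 ≤ z.1})
    (hΦt : ∀ τ : ℝ, 0 ≤ τ → ∀ t : ℝ, τ ≤ t →
      HasDerivAt (fun s => Φ s τ) (A t * Φ t τ) t)
    (hΦdiag : ∀ τ : ℝ, Φ τ τ = 1)
    (hΦtcont : ContinuousOn (fun z : ℝ × ℝ => A z.1 * Φ z.1 z.2)
      {z : ℝ × ℝ | 0 ≤ z.2 ∧ z.2 ≤ z.1})
    (Mbar : Matrix (Fin n) (Fin n) ℂ)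
    (hMbar : ∀ t : ℝ, 0 ≤ t → Matrix.PosSemidef (Mbar - M t * (M t)ᴴ))
    -- F(t) = ∫₀^t Φ(t,τ) M(τ) dτ and W(t) = F(t) F(t)^*
    (F W : ℝ → Matrix (Fin n) (Fin n) ℂ)
    (hF : ∀ t : ℝ, F t = ∫ τ in (0:ℝ)..t, Φ t τ * M τ)
    (hW : ∀ t : ℝ, W t = F t * (F t)ᴴ) :
    ∀ t : ℝ, 0 < t →
      ∃ W' : Matrix (Fin n) (Fin n) ℂ,
        HasDerivAt W W' t ∧
        Matrix.PosSemidef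
          (A t * W t + W t * (A t)ᴴ + W t + Mbar - W') := by
  intro t ht
  obtain rfl : W = fun s => F s * (F s)ᴴ := funext hW
  obtain rfl : F = fun s => ∫ τ in (0:ℝ)..s, Φ s τ * M τ := funext hF
  have hF' := hasDerivAt_integral_transition_mul A M Φ hM hΦcont hΦt hΦdiag hΦtcont ht
  exact ⟨_, hF'.mul hF'.star, posSemidef_lyapunov_sub (hMbar t ht.le)⟩

/-- Lyapunov differential inequality for the factored Gramian
(Remark containing equations (Lya_W_dp)). -/
theorem lyapunov_inequality_factored_gramian
    {n : ℕ} (A : ℝ → Matrix (Fin n) (Fin n) ℂ) (hA : ContinuousOn A (Set.Ici 0))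
    (M : ℝ → Matrix (Fin n) (Fin n) ℂ) (hM : ContinuousOn M (Set.Ici 0))
    (Φ : ℝ → ℝ → Matrix (Fin n) (Fin n) ℂ)
    (hΦcont : ContinuousOn (fun z : ℝ × ℝ => Φ z.1 z.2)
      {z : ℝ × ℝ | 0 ≤ z.2 ∧ z.2 ≤ z.1})
    (hΦt : ∀ τ : ℝ, 0 ≤ τ → ∀ t : ℝ, τ ≤ t →
      HasDerivAt (fun s => Φ s τ) (A t * Φ t τ) t)
    (hΦdiag : ∀ τ : ℝ, Φ τ τ = 1)
    (hΦtcont : ContinuousOn (fun z : ℝ × ℝ => A z.1 * Φ z.1 z.2)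
      {z : ℝ × ℝ | 0 ≤ z.2 ∧ z.2 ≤ z.1})
    (Mbar : Matrix (Fin n) (Fin n) ℂ) (hMbarH : Mbar.IsHermitian)
    (hMbar : ∀ t : ℝ, 0 ≤ t → Matrix.PosSemidef (Mbar - M t * (M t)ᴴ))
    -- F(t) = ∫₀^t Φ(t,τ) M(τ) dτ and W(t) = F(t) F(t)^*
    (F W : ℝ → Matrix (Fin n) (Fin n) ℂ)
    (hF : ∀ t : ℝ, F t = ∫ τ in (0:ℝ)..t, Φ t τ * M τ)
    (hW : ∀ t : ℝ, W t = F t * (F t)ᴴ) :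
    ∀ t : ℝ, 0 < t →
      ∃ W' : Matrix (Fin n) (Fin n) ℂ,
        HasDerivAt W W' t ∧
        Matrix.PosSemidef
          (A t * W t + W t * (A t)ᴴ + W t + Mbar - W') :=
  lyapunov_inequality_factored_gramian_general A M hM Φ hΦcont hΦt hΦdiag hΦtcont Mbar hMbar F W hF
    hW
end

section
/- Vanishing Cesàro average of the cross terms between the oscillatory and the state-transition-weighted frequency kernels (Proposition 1, second list, item (3)). Let A ∈ ℂ^{n×n} be Hurwitz and B ∈ ℂ^{n×p}, and let Ω = [a,b] ⊂ ℝ be a compact interval. For s ≥ 0 and ω ∈ ℝ define V₁(s,ω) = e^{iωs} (iωI − A)^{-1} B and V₂(s,ω) = −exp(As) (iωI − A)^{-1} B. Then lim_{t→∞} (1/t) ∫₀^t [ ∬_{Ω×Ω} He( V₁(s,ω) V₂(s,ω̃)^* ) dω dω̃ ] ds = 0, where the limit is the zero n×n matrix (equivalently, the limit holds in operator norm). -/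
/-!
On the compact frequency window `[a, b]` the resolvent `(iωI - A)⁻¹ B` is continuous, hence
bounded, so at time `s` the double integral is bounded in norm by a constant times
`‖exp (s A)‖`. Since `A` is Hurwitz, `s ↦ exp (s A)` is integrable on `(0, ∞)`: writing `1` as a
sum of generalized eigenvectors `x` of left multiplication by `A`, each `exp (s A) x` is
`e^{sμ}` times a polynomial in `s`, with `Re μ < 0`. A function dominated by an integrable one
has bounded partial integrals, so its Cesàro averages tend to `0`.
-/

open Matrix MeasureTheory
open scoped Matrix.Norms.L2Operator

/-- A complex square matrix is Hurwitz if every eigenvalue (spectrum element)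
has negative real part. -/
def IsHurwitz {n : ℕ} (A : Matrix (Fin n) (Fin n) ℂ) : Prop :=
  ∀ μ ∈ spectrum ℂ A, μ.re < 0

/-- `He M = M + M^*`. -/
noncomputable def He {n : ℕ} (M : Matrix (Fin n) (Fin n) ℂ) :
    Matrix (Fin n) (Fin n) ℂ := M + Mᴴ

open Filter Set Topology Asymptotics

theorem mem_spectrum_of_pow_sub_mul_eq_zero {R 𝔸 : Type*} [CommSemiring R] [Ring 𝔸]
    [Algebra R 𝔸] {a x : 𝔸} {μ : R} {k : ℕ} (hx : (a - algebraMap R 𝔸 μ) ^ k * x = 0)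
    (hx0 : x ≠ 0) : μ ∈ spectrum R a := by
  rw [spectrum.mem_iff, ← IsUnit.neg_iff, neg_sub]
  exact fun hu => hx0 ((hu.pow k).mul_right_eq_zero.mp hx)

theorem integrableOn_cexp_mul_mul_pow_Ioi {μ : ℂ} (hμ : μ.re < 0) (j : ℕ) :
    IntegrableOn (fun s : ℝ => Complex.exp (s * μ) * (s : ℂ) ^ j) (Ioi 0) := by
  set b := -μ.re / 2
  have hb : 0 < b := by simp only [b]; linarith
  have hexp : (fun s : ℝ => Complex.exp (s * μ)) =O[atTop] fun s => Real.exp (μ.re * s) :=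
    isBigO_of_le _ fun s => by simp [Complex.norm_exp, mul_comm]
  have hpow : (fun s : ℝ => (s : ℂ) ^ j) =O[atTop] fun s => Real.exp (b * s) :=
    isBigO_norm_left.mp (by simpa using (isLittleO_pow_exp_pos_mul_atTop j hb).isBigO.norm_left)
  have hdecay : (fun s : ℝ => Complex.exp (s * μ) * (s : ℂ) ^ j) =O[atTop]
      fun s => Real.exp (-b * s) := by
    refine (hexp.mul hpow).congr_right fun s => ?_
    rw [← Real.exp_add]; congr 1; simp only [b]; ring
  have hcont : Continuous fun s : ℝ => Complex.exp (s * μ) * (s : ℂ) ^ j := by fun_prop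
  exact ((hcont.continuousOn.locallyIntegrableOn measurableSet_Ici).integrableOn_of_isBigO_atTop
    hdecay ⟨Ioi 0, Ioi_mem_atTop 0, exp_neg_integrableOn_Ioi 0 hb⟩).mono_set Ioi_subset_Ici_self

section ExpDecay

variable {𝔸 : Type*} [NormedRing 𝔸] [NormedAlgebra ℂ 𝔸] [CompleteSpace 𝔸]

theorem exp_smul_mul_eq_sum_of_pow_sub_mul_eq_zero {a x : 𝔸} {μ : ℂ} {k : ℕ}
    (hx : (a - algebraMap ℂ 𝔸 μ) ^ k * x = 0) (t : ℂ) :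
    NormedSpace.exp (t • a) * x = ∑ j ∈ Finset.range k,
      (Complex.exp (t * μ) * t ^ j) • ((j.factorial : ℂ)⁻¹ • ((a - algebraMap ℂ 𝔸 μ) ^ j * x)) := by
  let : NormedAlgebra ℚ 𝔸 := .restrictScalars ℚ ℂ 𝔸
  set N := a - algebraMap ℂ 𝔸 μ
  have hsplit : t • a = algebraMap ℂ 𝔸 (t * μ) + t • N := by
    rw [smul_sub, Algebra.smul_def t (algebraMap ℂ 𝔸 μ), ← map_mul]; abel
  have hvanish : ∀ j ∉ Finset.range k, ((j.factorial : ℂ)⁻¹ • (t • N) ^ j) * x = 0 := by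
    intro j hj
    rw [smul_pow, smul_mul_assoc, smul_mul_assoc,
      ← pow_sub_mul_pow N (not_lt.mp (Finset.mem_range.not.mp hj)), mul_assoc, hx, mul_zero,
      smul_zero, smul_zero]
  rw [hsplit, NormedSpace.exp_add_of_commute (Algebra.commutes _ _),
    ← NormedSpace.algebraMap_exp_comm, mul_assoc, ← Algebra.smul_def, ← Complex.exp_eq_exp_ℂ,
    NormedSpace.exp_eq_tsum ℂ, ← (NormedSpace.expSeries_summable' (𝕂 := ℂ) (t • N)).tsum_mul_right,
    tsum_eq_sum hvanish, Finset.smul_sum]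
  refine Finset.sum_congr rfl fun j _ => ?_
  rw [smul_pow, smul_mul_assoc, smul_mul_assoc, mul_smul, smul_comm ((j.factorial : ℂ)⁻¹)]

theorem integrableOn_exp_smul_mul_of_pow_sub_mul_eq_zero {a x : 𝔸} {μ : ℂ} {k : ℕ}
    (hx : (a - algebraMap ℂ 𝔸 μ) ^ k * x = 0) (hμ : μ.re < 0) :
    IntegrableOn (fun s : ℝ => NormedSpace.exp ((s : ℂ) • a) * x) (Ioi 0) := by
  simp_rw [exp_smul_mul_eq_sum_of_pow_sub_mul_eq_zero hx]
  exact integrable_finsetSum _ fun j _ => (integrableOn_cexp_mul_mul_pow_Ioi hμ j).smul_const _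

theorem integrableOn_exp_smul_of_forall_spectrum_re_neg [FiniteDimensional ℂ 𝔸] {a : 𝔸}
    (ha : ∀ μ ∈ spectrum ℂ a, μ.re < 0) :
    IntegrableOn (fun s : ℝ => NormedSpace.exp ((s : ℂ) • a)) (Ioi 0) := by
  have hone : (1 : 𝔸) ∈ ⨆ μ, (Algebra.lmul ℂ 𝔸 a).maxGenEigenspace μ := by
    rw [Module.End.iSup_maxGenEigenspace_eq_top]; trivial
  obtain ⟨c, hc, hsum⟩ := (Submodule.mem_iSup_iff_exists_finsupp _ _).mp hone
  have hexp : (fun s : ℝ => NormedSpace.exp ((s : ℂ) • a)) =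
      fun s : ℝ => ∑ μ ∈ c.support, NormedSpace.exp ((s : ℂ) • a) * c μ := by
    funext s; rw [← Finset.mul_sum, show ∑ μ ∈ c.support, c μ = 1 from hsum, mul_one]
  rw [hexp]
  refine integrable_finsetSum _ fun μ hμ => ?_
  obtain ⟨k, hk⟩ := (Module.End.mem_maxGenEigenspace _ _ _).mp (hc μ)
  have hlmul : Algebra.lmul ℂ 𝔸 a - μ • 1 = Algebra.lmul ℂ 𝔸 (a - algebraMap ℂ 𝔸 μ) := by
    rw [map_sub, AlgHom.commutes, Algebra.algebraMap_eq_smul_one]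
  rw [hlmul, ← map_pow, Algebra.coe_lmul_eq_mul, LinearMap.mul_apply'] at hk
  exact integrableOn_exp_smul_mul_of_pow_sub_mul_eq_zero hk
    (ha μ (mem_spectrum_of_pow_sub_mul_eq_zero hk (Finsupp.mem_support_iff.mp hμ)))

end ExpDecay

namespace IsHurwitz

variable {n : ℕ} {A : Matrix (Fin n) (Fin n) ℂ}

theorem isUnit_I_mul_smul_one_sub (hA : IsHurwitz A) (ω : ℝ) :
    IsUnit ((Complex.I * ω) • (1 : Matrix (Fin n) (Fin n) ℂ) - A) := by
  have hω : Complex.I * ω ∉ spectrum ℂ A := fun h => by simpa using hA _ h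
  simpa [spectrum.mem_iff, Algebra.algebraMap_eq_smul_one] using hω

theorem continuous_resolvent (hA : IsHurwitz A) :
    Continuous fun ω : ℝ => ((Complex.I * ω) • (1 : Matrix (Fin n) (Fin n) ℂ) - A)⁻¹ := by
  simp_rw [nonsing_inv_eq_ringInverse]
  exact continuous_iff_continuousAt.mpr fun ω =>
    (NormedRing.inverse_continuousAt (hA.isUnit_I_mul_smul_one_sub ω).unit).comp_of_eq
      (by fun_prop) (hA.isUnit_I_mul_smul_one_sub ω).unit_spec.symm

theorem integrableOn_exp_smul (hA : IsHurwitz A) :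
    IntegrableOn (fun s : ℝ => NormedSpace.exp (s • A)) (Ioi 0) := by
  simp_rw [← Complex.coe_smul]
  exact integrableOn_exp_smul_of_forall_spectrum_re_neg hA

end IsHurwitz

theorem norm_He_mul_conjTranspose_le {n p : ℕ} (X Y : Matrix (Fin n) (Fin p) ℂ) :
    ‖He (X * Yᴴ)‖ ≤ 2 * (‖X‖ * ‖Y‖) := by
  calc ‖He (X * Yᴴ)‖ ≤ ‖X * Yᴴ‖ + ‖(X * Yᴴ)ᴴ‖ := norm_add_le _ _
    _ = 2 * ‖X * Yᴴ‖ := by rw [l2_opNorm_conjTranspose]; ring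
    _ ≤ 2 * (‖X‖ * ‖Y‖) := by grw [l2_opNorm_mul, l2_opNorm_conjTranspose]

theorem tendsto_one_div_smul_intervalIntegral_of_norm_le {E : Type*} [NormedAddCommGroup E]
    [NormedSpace ℝ E] {f : ℝ → E} {g : ℝ → ℝ} (hg : IntegrableOn g (Ioi 0))
    (hfg : ∀ s, 0 < s → ‖f s‖ ≤ g s) :
    Tendsto (fun t => (1 / t) • ∫ s in (0 : ℝ)..t, f s) atTop (𝓝 0) := by
  set M := ∫ s in Ioi 0, g s
  have hbound : ∀ t, 0 < t → ‖∫ s in (0 : ℝ)..t, f s‖ ≤ M := fun t ht =>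
    calc ‖∫ s in (0 : ℝ)..t, f s‖ ≤ ∫ s in (0 : ℝ)..t, g s :=
          intervalIntegral.norm_integral_le_of_norm_le ht.le
            (ae_of_all _ fun s hs => hfg s hs.1)
            ((intervalIntegrable_iff_integrableOn_Ioc_of_le ht.le).mpr
              (hg.mono_set Ioc_subset_Ioi_self))
      _ ≤ M := by
          rw [intervalIntegral.integral_of_le ht.le]
          refine setIntegral_mono_set hg ?_ Ioc_subset_Ioi_self.eventuallyLE
          filter_upwards [ae_restrict_mem measurableSet_Ioi] with s hs
          exact (norm_nonneg _).trans (hfg s hs)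
  refine squeeze_zero_norm' ?_ (tendsto_const_nhds (x := M).div_atTop tendsto_id)
  filter_upwards [eventually_gt_atTop 0] with t ht
  rw [norm_smul, Real.norm_of_nonneg (by positivity), one_div_mul_eq_div]
  exact div_le_div_of_nonneg_right (hbound t ht) ht.le

theorem cesaro_average_V1_V2_cross_vanishes_general
    {n p : ℕ} (A : Matrix (Fin n) (Fin n) ℂ) (hA : IsHurwitz A)
    (B : Matrix (Fin n) (Fin p) ℂ) (a b : ℝ)
    (V₁ V₂ : ℝ → ℝ → Matrix (Fin n) (Fin p) ℂ)
    (hV₁ : ∀ (s ω : ℝ), V₁ s ω =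
      Complex.exp (Complex.I * ω * s) •
        (((Complex.I * ω) • (1 : Matrix (Fin n) (Fin n) ℂ) - A)⁻¹ * B))
    (hV₂ : ∀ (s ω : ℝ), V₂ s ω =
      -(NormedSpace.exp (s • A) *
          ((Complex.I * ω) • (1 : Matrix (Fin n) (Fin n) ℂ) - A)⁻¹ * B)) :
    Filter.Tendsto
      (fun t : ℝ => (1 / t) •
        ∫ s in (0:ℝ)..t,
          ∫ ω in Set.Icc a b, ∫ ω' in Set.Icc a b,
            He (V₁ s ω * (V₂ s ω')ᴴ))
      Filter.atTop (nhds 0) := by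
  obtain ⟨K, hK⟩ : ∃ K, ∀ ω ∈ Icc a b,
      ‖((Complex.I * ω) • (1 : Matrix (Fin n) (Fin n) ℂ) - A)⁻¹ * B‖ ≤ K :=
    isCompact_Icc.exists_bound_of_continuousOn
      (hA.continuous_resolvent.matrix_mul continuous_const).continuousOn
  have hV₁_le : ∀ s, ∀ ω ∈ Icc a b, ‖V₁ s ω‖ ≤ K := fun s ω hω => by
    rw [hV₁, norm_smul, Complex.norm_exp]
    simpa using hK ω hω
  have hV₂_le : ∀ s, ∀ ω ∈ Icc a b, ‖V₂ s ω‖ ≤ ‖NormedSpace.exp (s • A)‖ * K :=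
    fun s ω hω => by
      rw [hV₂, norm_neg, Matrix.mul_assoc]
      exact (l2_opNorm_mul _ _).trans (by gcongr; exact hK ω hω)
  set L := volume.real (Icc a b)
  refine tendsto_one_div_smul_intervalIntegral_of_norm_le
    (hA.integrableOn_exp_smul.norm.const_mul (2 * (K * L) ^ 2)) fun s _ => ?_
  calc _ ≤ 2 * (K * (‖NormedSpace.exp (s • A)‖ * K)) * L * L :=
        norm_setIntegral_le_of_norm_le_const measure_Icc_lt_top fun ω hω =>
          norm_setIntegral_le_of_norm_le_const measure_Icc_lt_top fun ω' hω' =>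
            (norm_He_mul_conjTranspose_le _ _).trans <| by
              have hK₀ : 0 ≤ K := (norm_nonneg _).trans (hV₁_le s ω hω)
              gcongr
              exacts [hV₁_le s ω hω, hV₂_le s ω' hω']
    _ = _ := by ring

/-- Vanishing Cesàro average of the cross terms between the oscillatory and the
state-transition-weighted frequency kernels
(Proposition 1, second list, item (3)). -/
theorem cesaro_average_V1_V2_cross_vanishes
    {n p : ℕ} (A : Matrix (Fin n) (Fin n) ℂ) (hA : IsHurwitz A)
    (B : Matrix (Fin n) (Fin p) ℂ) (a b : ℝ) (hab : a ≤ b)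
    (V₁ V₂ : ℝ → ℝ → Matrix (Fin n) (Fin p) ℂ)
    (hV₁ : ∀ (s ω : ℝ), V₁ s ω =
      Complex.exp (Complex.I * ω * s) •
        (((Complex.I * ω) • (1 : Matrix (Fin n) (Fin n) ℂ) - A)⁻¹ * B))
    (hV₂ : ∀ (s ω : ℝ), V₂ s ω =
      -(NormedSpace.exp (s • A) *
          ((Complex.I * ω) • (1 : Matrix (Fin n) (Fin n) ℂ) - A)⁻¹ * B)) :
    Filter.Tendsto
      (fun t : ℝ => (1 / t) •
        ∫ s in (0:ℝ)..t,
          ∫ ω in Set.Icc a b, ∫ ω' in Set.Icc a b,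
            He (V₁ s ω * (V₂ s ω')ᴴ))
      Filter.atTop (nhds 0) :=
  cesaro_average_V1_V2_cross_vanishes_general A hA B a b V₁ V₂ hV₁ hV₂
end
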